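/- Let p be a polynomial in variables x₁,…,x_m all of whose monomials have even total degree, and consider constraint polynomials g₁,…,g_r also having only even-degree monomials. If y is a feasible moment sequence for the order-γ moment relaxation (i.e., M_γ{y} ⪰ 0, the localizing matrices are PSD, and y₀ = 1), then the modified sequence y' obtained by setting y'_α = y_α for |α| even and y'_α = 0 for |α| odd is also feasible, and L_{y'}{p} = L_y{p}. -/

import Mathlib

/-!
Zeroing the odd-degree moments multiplies the moment matrix and every localizing matrix
entrywise by the mask `[|α| ≡ |β| mod 2]`: an entry indexed by `(α, β)` involves moments of
degree `|α| + |β| + |δ|` with `|δ|` even, which is odd exactly when `α` and `β` have different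
parities. The mask is the pullback of the identity matrix along the parity map, hence positive
semidefinite, so by the Schur product theorem positive semidefiniteness is preserved. The
objective only sees even-degree moments, so its value is unchanged.
-/

namespace Matrix

open scoped ComplexOrder

variable {n κ 𝕜 : Type*} [RCLike 𝕜]

theorem PosSemidef.of_eq_ite_eq [DecidableEq κ] {M N : Matrix n n 𝕜} (hM : M.PosSemidef)
    (f : n → κ) (hN : ∀ i j, N i j = if f i = f j then M i j else 0) : N.PosSemidef := by
  have hmask : N = M ⊙ (1 : Matrix κ κ 𝕜).submatrix f f := by
    ext i j
    simp [hN, one_apply]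
  exact hmask ▸ hM.hadamard (PosSemidef.one.submatrix f)

end Matrix

section EvenPart

variable {ι R : Type*} [Fintype ι] [Zero R]

def evenPart (y : (ι → ℕ) → R) (α : ι → ℕ) : R :=
  if Even (∑ i, α i) then y α else 0

variable (y : (ι → ℕ) → R)

theorem evenPart_of_even {α : ι → ℕ} (h : Even (∑ i, α i)) : evenPart y α = y α :=
  if_pos h

theorem evenPart_zero : evenPart y 0 = y 0 :=
  evenPart_of_even y (by simp)

theorem evenPart_add (a b : ι → ℕ) :
    evenPart y (fun i => a i + b i) =
      if decide (Even (∑ i, a i)) = decide (Even (∑ i, b i)) then y (fun i => a i + b i)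
      else 0 := by
  simp only [evenPart, Finset.sum_add_distrib, Nat.even_add, decide_eq_decide]

theorem evenPart_add_add_of_even (a b δ : ι → ℕ) (hδ : Even (∑ i, δ i)) :
    evenPart y (fun i => a i + b i + δ i) =
      if decide (Even (∑ i, a i)) = decide (Even (∑ i, b i)) then y (fun i => a i + b i + δ i)
      else 0 := by
  simp only [evenPart, Finset.sum_add_distrib, Nat.even_add, hδ, iff_true, decide_eq_decide]

end EvenPart

theorem sum_mul_evenPart_add_add_of_even {ι R : Type*} [Fintype ι]
    [NonUnitalNonAssocSemiring R] (y : (ι → ℕ) → R) (s : Finset (ι →₀ ℕ))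
    (c : (ι →₀ ℕ) → R) (a b : ι → ℕ) (hs : ∀ δ ∈ s, Even (∑ i, δ i)) :
    ∑ δ ∈ s, c δ * evenPart y (fun i => a i + b i + δ i) =
      if decide (Even (∑ i, a i)) = decide (Even (∑ i, b i)) then
        ∑ δ ∈ s, c δ * y (fun i => a i + b i + δ i)
      else 0 := by
  rw [Finset.sum_congr rfl fun δ hδ => by rw [evenPart_add_add_of_even y a b δ (hs δ hδ)]]
  split_ifs <;> simp

/-- If the objective polynomial `p` and all constraint polynomials `g j` have only
even-degree monomials, and `y` is feasible for the order-`γ` moment relaxation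
(moment matrix PSD, localizing matrices PSD, `y₀ = 1`), then the sequence `y'`
obtained by zeroing all odd-degree entries of `y` is also feasible and gives
the same objective value `L_{y'}{p} = L_y{p}`. -/
theorem stmt5 (m γ r : ℕ) (p : MvPolynomial (Fin m) ℝ)
    (g : Fin r → MvPolynomial (Fin m) ℝ) (d : Fin r → ℕ)
    (hp : ∀ α ∈ p.support, Even (α.sum fun _ e => e))
    (hg : ∀ j, ∀ α ∈ (g j).support, Even (α.sum fun _ e => e))
    (y : (Fin m → ℕ) → ℝ)
    (hy0 : y (fun _ => 0) = 1)
    (hM : (Matrix.of (fun α β : {a : Fin m → Fin (γ + 1) // ∑ i, (a i : ℕ) ≤ γ} =>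
        y (fun i => (α.1 i : ℕ) + (β.1 i : ℕ)))).PosSemidef)
    (hL : ∀ j, (Matrix.of
        (fun α β : {a : Fin m → Fin (γ + 1) // ∑ i, (a i : ℕ) ≤ d j} =>
          ∑ δ ∈ (g j).support,
            (g j).coeff δ * y (fun i => (α.1 i : ℕ) + (β.1 i : ℕ) + δ i))).PosSemidef) :
    ∃ y' : (Fin m → ℕ) → ℝ,
      (∀ α, y' α = if Even (∑ i, α i) then y α else 0) ∧
      y' (fun _ => 0) = 1 ∧
      (Matrix.of (fun α β : {a : Fin m → Fin (γ + 1) // ∑ i, (a i : ℕ) ≤ γ} =>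
        y' (fun i => (α.1 i : ℕ) + (β.1 i : ℕ)))).PosSemidef ∧
      (∀ j, (Matrix.of
        (fun α β : {a : Fin m → Fin (γ + 1) // ∑ i, (a i : ℕ) ≤ d j} =>
          ∑ δ ∈ (g j).support,
            (g j).coeff δ * y' (fun i => (α.1 i : ℕ) + (β.1 i : ℕ) + δ i))).PosSemidef) ∧
      ∑ α ∈ p.support, p.coeff α * y' α = ∑ α ∈ p.support, p.coeff α * y α := by
  have hdeg (α : Fin m →₀ ℕ) (h : Even (α.sum fun _ e => e)) : Even (∑ i, α i) := by
    rwa [Finsupp.sum_fintype _ _ fun _ => rfl] at h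
  refine ⟨evenPart y, fun _ => rfl, (evenPart_zero y).trans hy0, ?_, fun j => ?_, ?_⟩
  · exact hM.of_eq_ite_eq (fun α => decide (Even (∑ i, (α.1 i : ℕ))))
      fun α β => evenPart_add y _ _
  · exact (hL j).of_eq_ite_eq (fun α => decide (Even (∑ i, (α.1 i : ℕ))))
      fun α β => sum_mul_evenPart_add_add_of_even y _ _ _ _ fun δ hδ => hdeg δ (hg j δ hδ)
  · exact Finset.sum_congr rfl fun α hα => by rw [evenPart_of_even y (hdeg α (hp α hα))]
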